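/- Let ♯ : U(h) → U(h) be the antipode (antiautomorphism with X♯ = -X for X ∈ h). Let U(g) be a right U(h)-module by multiplication and End(V) a left U(h)-module by h·T = T ∘ τ(h♯) for a representation τ of h on V. Then the left ideal J of U(g) ⊗ End(V) generated by {u·h ⊗ T - u ⊗ h·T : u ∈ U(g), h ∈ U(h), T ∈ End(V)} is already generated by the elements Y ⊗ I_V + 1 ⊗ τ(Y) for Y ∈ h. -/

import Mathlib

open TensorProduct

attribute [local instance 100] LieRing.ofAssociativeRing

/-- The canonical algebra map `U(h) → U(g)` induced by the inclusion of a
Lie subalgebra `h ⊆ g`. -/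
noncomputable def inclU (K : Type*) {L : Type*} [CommRing K] [LieRing L] [LieAlgebra K L]
    (H : LieSubalgebra K L) :
    UniversalEnvelopingAlgebra K ↥H →ₐ[K] UniversalEnvelopingAlgebra K L :=
  UniversalEnvelopingAlgebra.lift K
    ((UniversalEnvelopingAlgebra.ι K (L := L)).comp H.incl)

/-- Induction principle for the universal enveloping algebra. -/
theorem ue_induction {R L : Type*} [CommRing R] [LieRing L] [LieAlgebra R L]
    {C : UniversalEnvelopingAlgebra R L → Prop}
    (halg : ∀ r : R, C (algebraMap R (UniversalEnvelopingAlgebra R L) r))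
    (hι : ∀ x : L, C (UniversalEnvelopingAlgebra.ι R x))
    (hmul : ∀ a b, C a → C b → C (a * b))
    (hadd : ∀ a b, C a → C b → C (a + b)) :
    ∀ a, C a := by
  intro a
  obtain ⟨a, rfl⟩ : ∃ b, UniversalEnvelopingAlgebra.mkAlgHom R L b = a :=
    RingCon.mkₐ_surjective (α := R) _ a
  induction a using TensorAlgebra.induction with
  | algebraMap r => rw [AlgHom.commutes]; exact halg r
  | ι x =>
    have : (UniversalEnvelopingAlgebra.mkAlgHom R L) (TensorAlgebra.ι R x)
        = UniversalEnvelopingAlgebra.ι R x := rfl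
    rw [this]; exact hι x
  | mul a b ha hb => rw [map_mul]; exact hmul _ _ ha hb
  | add a b ha hb => rw [map_add]; exact hadd _ _ ha hb

/-- Let `♯ : U(h) → U(h)` be the antipode (`X♯ = -X` on `h`), `U(g)` a right
`U(h)`-module by multiplication, and `End(V)` a left `U(h)`-module by
`h·T = T ∘ τ(h♯)`.  The sharp-twisted extension of `τ` to `U(h)` is encoded
as the algebra homomorphism `Sσ : U(h) → End(V)ᵐᵒᵖ` with
`Sσ(Y) = op(-τ(Y))` for `Y ∈ h`, so that `τ(h♯) = (Sσ h).unop`.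
Then the left ideal `J` of `U(g) ⊗ End(V)` generated by the elements
`u·h ⊗ T - u ⊗ h·T` (for `u ∈ U(g)`, `h ∈ U(h)`, `T ∈ End(V)`) is already
generated by the elements `Y ⊗ I_V + 1 ⊗ τ(Y)` for `Y ∈ h`. -/
theorem stmt15 {K L V : Type*} [CommRing K] [LieRing L] [LieAlgebra K L]
    [AddCommGroup V] [Module K V]
    (H : LieSubalgebra K L) (τ : ↥H →ₗ⁅K⁆ Module.End K V)
    (Sσ : UniversalEnvelopingAlgebra K ↥H →ₐ[K] (Module.End K V)ᵐᵒᵖ)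
    (hSσ : ∀ Y : ↥H,
      Sσ (UniversalEnvelopingAlgebra.ι K Y) = MulOpposite.op (-(τ Y))) :
    Submodule.span (UniversalEnvelopingAlgebra K L ⊗[K] Module.End K V)
      {x : UniversalEnvelopingAlgebra K L ⊗[K] Module.End K V |
        ∃ (u : UniversalEnvelopingAlgebra K L)
          (h : UniversalEnvelopingAlgebra K ↥H) (T : Module.End K V),
          x = (u * inclU K H h) ⊗ₜ[K] T - u ⊗ₜ[K] (T * (Sσ h).unop)} =
    Submodule.span (UniversalEnvelopingAlgebra K L ⊗[K] Module.End K V)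
      {x : UniversalEnvelopingAlgebra K L ⊗[K] Module.End K V |
        ∃ Y : ↥H,
          x = (UniversalEnvelopingAlgebra.ι K (Y : L)) ⊗ₜ[K] (1 : Module.End K V)
            + (1 : UniversalEnvelopingAlgebra K L) ⊗ₜ[K] (τ Y)} := by
  set S := Submodule.span (UniversalEnvelopingAlgebra K L ⊗[K] Module.End K V)
      {x : UniversalEnvelopingAlgebra K L ⊗[K] Module.End K V |
        ∃ Y : ↥H,
          x = (UniversalEnvelopingAlgebra.ι K (Y : L)) ⊗ₜ[K] (1 : Module.End K V)
            + (1 : UniversalEnvelopingAlgebra K L) ⊗ₜ[K] (τ Y)} with hS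
  apply le_antisymm
  · rw [Submodule.span_le]
    rintro x ⟨u, h, T, rfl⟩
    revert u T
    induction h using ue_induction with
    | halg r =>
      intro u T
      have h1 : inclU K H (algebraMap K _ r) = algebraMap K _ r := (inclU K H).commutes r
      have h2 : (Sσ (algebraMap K _ r)).unop = algebraMap K (Module.End K V) r := by
        rw [Sσ.commutes]; rfl
      have : (u * inclU K H (algebraMap K _ r)) ⊗ₜ[K] T
          - u ⊗ₜ[K] (T * (Sσ (algebraMap K _ r)).unop) = 0 := by
        rw [h1, h2, Algebra.algebraMap_eq_smul_one, Algebra.algebraMap_eq_smul_one,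
          mul_smul_comm, mul_one, mul_smul_comm, mul_one, TensorProduct.smul_tmul,
          sub_self]
      change _ ∈ (S : Set (UniversalEnvelopingAlgebra K L ⊗[K] Module.End K V))
      show _ ∈ S
      rw [this]
      exact zero_mem S
    | hι Y =>
      intro u T
      have h1 : inclU K H (UniversalEnvelopingAlgebra.ι K Y)
          = UniversalEnvelopingAlgebra.ι K (Y : L) :=
        UniversalEnvelopingAlgebra.lift_ι_apply K _ Y
      have h2 : (Sσ (UniversalEnvelopingAlgebra.ι K Y)).unop = -(τ Y) := by
        rw [hSσ]; rfl
      change _ ∈ (S : Set (UniversalEnvelopingAlgebra K L ⊗[K] Module.End K V))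
      show _ ∈ S
      have key : (u * inclU K H (UniversalEnvelopingAlgebra.ι K Y)) ⊗ₜ[K] T
          - u ⊗ₜ[K] (T * (Sσ (UniversalEnvelopingAlgebra.ι K Y)).unop)
          = (u ⊗ₜ[K] T) * ((UniversalEnvelopingAlgebra.ι K (Y : L)) ⊗ₜ[K] (1 : Module.End K V)
            + (1 : UniversalEnvelopingAlgebra K L) ⊗ₜ[K] (τ Y)) := by
        rw [h1, h2, mul_neg, TensorProduct.tmul_neg, sub_neg_eq_add, mul_add,
          Algebra.TensorProduct.tmul_mul_tmul, Algebra.TensorProduct.tmul_mul_tmul,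
          mul_one, mul_one]
      rw [key]
      have hgen : (UniversalEnvelopingAlgebra.ι K (Y : L)) ⊗ₜ[K] (1 : Module.End K V)
          + (1 : UniversalEnvelopingAlgebra K L) ⊗ₜ[K] (τ Y) ∈ S :=
        Submodule.subset_span ⟨Y, rfl⟩
      simpa using Submodule.smul_mem S (u ⊗ₜ[K] T) hgen
    | hmul a b ha hb =>
      intro u T
      change _ ∈ (S : Set (UniversalEnvelopingAlgebra K L ⊗[K] Module.End K V))
      show _ ∈ S
      have key : (u * inclU K H (a * b)) ⊗ₜ[K] T - u ⊗ₜ[K] (T * (Sσ (a * b)).unop)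
          = ((u * inclU K H a * inclU K H b) ⊗ₜ[K] T
              - (u * inclU K H a) ⊗ₜ[K] (T * (Sσ b).unop))
            + ((u * inclU K H a) ⊗ₜ[K] (T * (Sσ b).unop)
              - u ⊗ₜ[K] (T * (Sσ b).unop * (Sσ a).unop)) := by
        rw [map_mul, map_mul, MulOpposite.unop_mul, sub_add_sub_cancel, mul_assoc, mul_assoc]
      rw [key]
      exact add_mem (hb (u * inclU K H a) T) (ha u (T * (Sσ b).unop))
    | hadd a b ha hb =>
      intro u T
      change _ ∈ (S : Set (UniversalEnvelopingAlgebra K L ⊗[K] Module.End K V))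
      show _ ∈ S
      have key : (u * inclU K H (a + b)) ⊗ₜ[K] T - u ⊗ₜ[K] (T * (Sσ (a + b)).unop)
          = ((u * inclU K H a) ⊗ₜ[K] T - u ⊗ₜ[K] (T * (Sσ a).unop))
            + ((u * inclU K H b) ⊗ₜ[K] T - u ⊗ₜ[K] (T * (Sσ b).unop)) := by
        rw [map_add, map_add, MulOpposite.unop_add, mul_add, mul_add,
          TensorProduct.add_tmul, TensorProduct.tmul_add]
        abel
      rw [key]
      exact add_mem (ha u T) (hb u T)
  · rw [Submodule.span_le]
    rintro x ⟨Y, rfl⟩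
    apply Submodule.subset_span
    refine ⟨1, UniversalEnvelopingAlgebra.ι K Y, 1, ?_⟩
    have h1 : inclU K H (UniversalEnvelopingAlgebra.ι K Y)
        = UniversalEnvelopingAlgebra.ι K (Y : L) :=
      UniversalEnvelopingAlgebra.lift_ι_apply K _ Y
    have h2 : (Sσ (UniversalEnvelopingAlgebra.ι K Y)).unop = -(τ Y) := by
      rw [hSσ]; rfl
    rw [h1, h2, one_mul, one_mul, TensorProduct.tmul_neg, sub_neg_eq_add]
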